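/- arXiv:hep-th/0108045 — 2 statements merged into one kernel-verified Lean document; each statement's English description precedes it below -/
import Mathlib

section
/- The derivative of the Moyal star product with respect to the noncommutativity parameter satisfies the Leibniz-type rule: ∂/∂θ^{ρσ}(f ⋆ g) = (∂f/∂θ^{ρσ}) ⋆ g + f ⋆ (∂g/∂θ^{ρσ}) + (i/4)[(∂_ρ f) ⋆ (∂_σ g) − (∂_σ f) ⋆ (∂_ρ g)], where the θ-derivative of an antisymmetric tensor is defined with the antisymmetrized rule ∂θ^{μν}/∂θ^{ρσ} = (1/2)(δ^μ_ρ δ^ν_σ − δ^μ_σ δ^ν_ρ). -/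
/-- Partial derivative ∂_μ of a function on ℝⁿ. -/
noncomputable def pd (n : ℕ) (μ : Fin n) (f : (Fin n → ℝ) → ℂ) : (Fin n → ℝ) → ℂ :=
  fun x => fderiv ℝ f x (Pi.single μ 1)

/-- Iterated partial derivatives along a list of directions. -/
noncomputable def pdList (n : ℕ) (l : List (Fin n)) (f : (Fin n → ℝ) → ℂ) :
    (Fin n → ℝ) → ℂ :=
  l.foldr (pd n) f

/-- The Moyal star product, as the formal series
(f ⋆ g)(x) = Σ_{k≥0} (1/k!) (i/2)^k θ^{μ₁ν₁}⋯θ^{μ_kν_k}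
              (∂_{μ₁}⋯∂_{μ_k} f)(x)(∂_{ν₁}⋯∂_{ν_k} g)(x). -/
noncomputable def moyal (n : ℕ) (θ : Matrix (Fin n) (Fin n) ℝ)
    (f g : (Fin n → ℝ) → ℂ) : (Fin n → ℝ) → ℂ :=
  fun x => ∑' k : ℕ, ((k.factorial : ℂ)⁻¹ * (Complex.I / 2) ^ k *
    ∑ m : Fin k → Fin n × Fin n,
      (∏ j, ((θ (m j).1 (m j).2 : ℝ) : ℂ)) *
        (pdList n (List.ofFn fun j => (m j).1) f x *
         pdList n (List.ofFn fun j => (m j).2) g x))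

/-- The μ-th coordinate function x^μ. -/
noncomputable def coord (n : ℕ) (μ : Fin n) : (Fin n → ℝ) → ℂ := fun x => (x μ : ℂ)

/-- Evaluation of a complex multivariate polynomial as a function on ℝⁿ. -/
noncomputable def polyFun (n : ℕ) (p : MvPolynomial (Fin n) ℂ) : (Fin n → ℝ) → ℂ :=
  fun x => MvPolynomial.eval (fun i => ((x i : ℝ) : ℂ)) p

/-- The antisymmetrized unit direction in θ-space, implementing the rule
∂θ^{μν}/∂θ^{ρσ} = (1/2)(δ^μ_ρ δ^ν_σ − δ^μ_σ δ^ν_ρ). -/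
noncomputable def thetaDir (n : ℕ) (ρ σ : Fin n) : Matrix (Fin n) (Fin n) ℝ :=
  fun μ ν => (1 / 2 : ℝ) * ((if μ = ρ ∧ ν = σ then 1 else 0) - (if μ = σ ∧ ν = ρ then 1 else 0))

open MvPolynomial in
lemma pderiv_comm' {n : ℕ} (i j : Fin n) (p : MvPolynomial (Fin n) ℂ) :
    pderiv i (pderiv j p) = pderiv j (pderiv i p) := by
  rcases eq_or_ne i j with rfl | hij
  · rfl
  induction p using MvPolynomial.induction_on' with
  | monomial s a =>
    simp only [pderiv_monomial, Finsupp.tsub_apply, Finsupp.single_apply, if_neg hij,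
      if_neg (Ne.symm hij), Nat.sub_zero]
    rw [tsub_right_comm]
    ring_nf
  | add p q hp hq => simp [map_add, hp, hq]

open MvPolynomial in
lemma totalDegree_pderiv_le' {n : ℕ} (i : Fin n) (p : MvPolynomial (Fin n) ℂ) :
    (pderiv i p).totalDegree ≤ p.totalDegree - 1 := by
  conv_lhs => rw [p.as_sum, map_sum]
  apply totalDegree_finsetSum_le
  intro s hs
  rw [pderiv_monomial]
  rcases eq_or_ne (s i) 0 with h | h
  · simp [h]
  · refine (totalDegree_monomial_le _ _).trans ?_
    have hle : (s.sum fun _ e => e) ≤ p.totalDegree := le_totalDegree hs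
    have key : ((s - Finsupp.single i 1).sum fun _ e => e) + 1 = s.sum fun _ e => e := by
      have h1 : Finsupp.single i 1 ≤ s := by
        rw [Finsupp.single_le_iff]; omega
      have h2 : (s - Finsupp.single i 1) + Finsupp.single i 1 = s := tsub_add_cancel_of_le h1
      calc ((s - Finsupp.single i 1).sum fun _ e => e) + 1
          = ((s - Finsupp.single i 1).sum fun _ e => e) +
            ((Finsupp.single i 1).sum fun _ e => e) := by
            rw [Finsupp.sum_single_index]; rfl
        _ = s.sum fun _ e => e := by
            rw [← Finsupp.sum_add_index' (fun _ => rfl) (fun _ _ _ => rfl), h2]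
    have : ((s - Finsupp.single i 1).sum fun _ => id) =
        ((s - Finsupp.single i 1).sum fun _ e => e) := rfl
    omega

/-- Iterated `pderiv` along a list. -/
noncomputable def pdPoly (n : ℕ) (l : List (Fin n)) (p : MvPolynomial (Fin n) ℂ) :
    MvPolynomial (Fin n) ℂ :=
  l.foldr (fun μ q => MvPolynomial.pderiv μ q) p

lemma pdPoly_cons {n : ℕ} (μ : Fin n) (l : List (Fin n)) (p : MvPolynomial (Fin n) ℂ) :
    pdPoly n (μ :: l) p = MvPolynomial.pderiv μ (pdPoly n l p) := rfl

open MvPolynomial in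
lemma totalDegree_pdPoly_le {n : ℕ} (l : List (Fin n)) (p : MvPolynomial (Fin n) ℂ) :
    (pdPoly n l p).totalDegree ≤ p.totalDegree - l.length := by
  induction l with
  | nil => simp [pdPoly]
  | cons μ l ih =>
    rw [pdPoly_cons]
    refine (totalDegree_pderiv_le' μ _).trans ?_
    simp only [List.length_cons]
    omega

open MvPolynomial in
lemma pderiv_eq_zero_of_totalDegree_eq_zero {n : ℕ} (i : Fin n) (p : MvPolynomial (Fin n) ℂ)
    (h : p.totalDegree = 0) : pderiv i p = 0 := by
  apply pderiv_eq_zero_of_notMem_vars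
  intro hv
  rw [mem_vars] at hv
  obtain ⟨d, hd, hid⟩ := hv
  rw [totalDegree_eq_zero_iff] at h
  exact absurd (h d hd i) (Finsupp.mem_support_iff.mp hid)

open MvPolynomial in
lemma pdPoly_eq_zero {n : ℕ} (l : List (Fin n)) (p : MvPolynomial (Fin n) ℂ)
    (h : p.totalDegree < l.length) : pdPoly n l p = 0 := by
  cases l with
  | nil => simp at h
  | cons μ l =>
    rw [pdPoly_cons]
    apply pderiv_eq_zero_of_totalDegree_eq_zero
    have := totalDegree_pdPoly_le l p
    simp only [List.length_cons] at h
    omega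

@[simp] lemma polyFun_add {n : ℕ} (p q : MvPolynomial (Fin n) ℂ) (x : Fin n → ℝ) :
    polyFun n (p + q) x = polyFun n p x + polyFun n q x := by simp [polyFun]

@[simp] lemma polyFun_mul {n : ℕ} (p q : MvPolynomial (Fin n) ℂ) (x : Fin n → ℝ) :
    polyFun n (p * q) x = polyFun n p x * polyFun n q x := by simp [polyFun]

@[simp] lemma polyFun_zero {n : ℕ} (x : Fin n → ℝ) : polyFun n 0 x = 0 := by simp [polyFun]

noncomputable def edR (n : ℕ) (j : Fin n) : (Fin n → ℝ) →L[ℝ] ℂ :=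
  (ContinuousLinearMap.proj j).smulRight (1 : ℂ)

noncomputable def Dp (n : ℕ) (p : MvPolynomial (Fin n) ℂ) (x : Fin n → ℝ) :
    (Fin n → ℝ) →L[ℝ] ℂ :=
  ∑ i, (ContinuousLinearMap.proj i).smulRight (polyFun n (MvPolynomial.pderiv i p) x)

open MvPolynomial in
lemma Dp_apply (n : ℕ) (p : MvPolynomial (Fin n) ℂ) (x : Fin n → ℝ) (v : Fin n → ℝ) :
    Dp n p x v = ∑ i, ((v i : ℝ) : ℂ) * polyFun n (pderiv i p) x := by
  simp [Dp, ContinuousLinearMap.sum_apply, Complex.real_smul]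

open MvPolynomial in
lemma polyFun_hasFDerivAt (n : ℕ) (p : MvPolynomial (Fin n) ℂ) (x : Fin n → ℝ) :
    HasFDerivAt (polyFun n p) (Dp n p x) x := by
  induction p using MvPolynomial.induction_on with
  | C a =>
    have h0 : polyFun n (C a) = fun _ => a := by funext y; simp [polyFun]
    have : Dp n (C a) x = 0 := by
      ext v
      simp [Dp_apply, polyFun]
    rw [h0, this]
    exact hasFDerivAt_const _ _
  | add p q hp hq =>
    have h0 : polyFun n (p + q) = fun y => polyFun n p y + polyFun n q y := by
      funext y; simp
    rw [h0]
    refine (hp.add hq).congr_fderiv ?_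
    ext v
    simp only [ContinuousLinearMap.add_apply, Dp_apply, map_add, polyFun_add]
    rw [← Finset.sum_add_distrib]
    congr 1; funext i; ring
  | mul_X p j hp =>
    have hXj : HasFDerivAt (fun y : Fin n → ℝ => ((y j : ℝ) : ℂ)) (edR n j) x := by
      have h := (edR n j).hasFDerivAt (x := x)
      have he : ⇑(edR n j) = fun y : Fin n → ℝ => ((y j : ℝ) : ℂ) := by
        funext y
        simp [edR, Complex.real_smul]
      rwa [he] at h
    have h0 : polyFun n (p * X j) = fun y => polyFun n p y * ((y j : ℝ) : ℂ) := by
      funext y; simp [polyFun]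
    rw [h0]
    refine (hp.mul hXj).congr_fderiv ?_
    ext v
    rw [ContinuousLinearMap.add_apply, ContinuousLinearMap.smul_apply,
      ContinuousLinearMap.smul_apply, Dp_apply, Dp_apply]
    have hedR : edR n j v = ((v j : ℝ) : ℂ) := by simp [edR, Complex.real_smul]
    rw [hedR]
    have expand : ∀ i : Fin n, polyFun n (pderiv i (p * X j)) x
        = polyFun n (pderiv i p) x * ((x j : ℝ) : ℂ)
          + polyFun n p x * (if i = j then 1 else 0) := by
      intro i
      rw [pderiv_mul]
      rcases eq_or_ne i j with rfl | hij
      · simp [polyFun, pderiv_X_self]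
      · simp [polyFun, pderiv_X_of_ne (Ne.symm hij), hij]
    have h1 : (∑ i, ((v i : ℝ) : ℂ) * polyFun n (pderiv i (p * X j)) x)
        = ∑ i, (((v i : ℝ) : ℂ) * (polyFun n (pderiv i p) x * ((x j : ℝ) : ℂ))
            + ((v i : ℝ) : ℂ) * (polyFun n p x * (if i = j then 1 else 0))) := by
      refine Finset.sum_congr rfl fun i _ => ?_
      rw [expand i, mul_add]
    have h2 : (∑ i, ((v i : ℝ) : ℂ) * (polyFun n p x * (if i = j then 1 else 0)))
        = polyFun n p x * ((v j : ℝ) : ℂ) := by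
      rw [Finset.sum_eq_single j]
      · simp [mul_comm]
      · intro i _ hi
        simp [hi]
      · simp
    rw [h1, Finset.sum_add_distrib, h2]
    have h3 : (∑ i, ((v i : ℝ) : ℂ) * (polyFun n (pderiv i p) x * ((x j : ℝ) : ℂ)))
        = ∑ i, ((x j : ℝ) : ℂ) * (((v i : ℝ) : ℂ) * polyFun n (pderiv i p) x) := by
      refine Finset.sum_congr rfl fun i _ => ?_
      ring
    rw [h3, ← Finset.mul_sum, smul_eq_mul, smul_eq_mul]
    ring


open MvPolynomial in
lemma pd_polyFun (n : ℕ) (μ : Fin n) (p : MvPolynomial (Fin n) ℂ) :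
    pd n μ (polyFun n p) = polyFun n (pderiv μ p) := by
  funext x
  rw [pd, (polyFun_hasFDerivAt n p x).fderiv, Dp_apply]
  rw [Finset.sum_eq_single μ]
  · simp
  · intro i _ hi
    simp [Pi.single_eq_of_ne hi]
  · simp

lemma pdList_polyFun (n : ℕ) (l : List (Fin n)) (p : MvPolynomial (Fin n) ℂ) :
    pdList n l (polyFun n p) = polyFun n (pdPoly n l p) := by
  induction l with
  | nil => rfl
  | cons μ l ih =>
    show pd n μ (pdList n l (polyFun n p)) = polyFun n (MvPolynomial.pderiv μ (pdPoly n l p))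
    rw [ih]
    exact pd_polyFun n μ _

lemma pd_zero (n : ℕ) (μ : Fin n) : pd n μ (fun _ => (0 : ℂ)) = fun _ => 0 := by
  funext x
  simp [pd, fderiv_const]

lemma pdList_zero (n : ℕ) (l : List (Fin n)) : pdList n l (fun _ => (0 : ℂ)) = fun _ => 0 := by
  induction l with
  | nil => rfl
  | cons μ l ih =>
    show pd n μ (pdList n l fun _ => 0) = fun _ => 0
    rw [ih, pd_zero]

lemma pdPoly_perm {n : ℕ} {l₁ l₂ : List (Fin n)} (h : l₁.Perm l₂) (p : MvPolynomial (Fin n) ℂ) :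
    pdPoly n l₁ p = pdPoly n l₂ p := by
  haveI : LeftCommutative (fun (μ : Fin n) (q : MvPolynomial (Fin n) ℂ) =>
      MvPolynomial.pderiv μ q) := ⟨fun i j q => pderiv_comm' i j q⟩
  exact h.foldr_eq p

lemma pdPoly_ofFn_comp {n k : ℕ} (h : Fin k → Fin n) (e : Equiv.Perm (Fin k))
    (p : MvPolynomial (Fin n) ℂ) :
    pdPoly n (List.ofFn (fun j => h (e j))) p = pdPoly n (List.ofFn h) p :=
  pdPoly_perm (e.ofFn_comp_perm h) p

lemma pderiv_pdPoly {n : ℕ} (μ : Fin n) (l : List (Fin n)) (p : MvPolynomial (Fin n) ℂ) :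
    pdPoly n l (MvPolynomial.pderiv μ p) = MvPolynomial.pderiv μ (pdPoly n l p) := by
  induction l with
  | nil => rfl
  | cons ν l ih =>
    show MvPolynomial.pderiv ν (pdPoly n l (MvPolynomial.pderiv μ p))
        = MvPolynomial.pderiv μ (MvPolynomial.pderiv ν (pdPoly n l p))
    rw [ih, pderiv_comm']

open MvPolynomial in
lemma pd_pdList_polyFun (n : ℕ) (μ : Fin n) (l : List (Fin n)) (p : MvPolynomial (Fin n) ℂ) :
    pd n μ (pdList n l (polyFun n p)) = pdList n l (pd n μ (polyFun n p)) := by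
  rw [pdList_polyFun, pd_polyFun, pd_polyFun, pdList_polyFun, pderiv_pdPoly]

open Finset in
lemma sum_erase_swap {β : Type*} [Fintype β] {k : ℕ} (θC dC : β → ℂ)
    (A : (Fin (k+1) → β) → ℂ)
    (hA : ∀ (e : Equiv.Perm (Fin (k+1))) (m : Fin (k+1) → β), A (fun i => m (e i)) = A m)
    (j : Fin (k+1)) :
    (∑ m : Fin (k+1) → β, (∏ j' ∈ univ.erase j, θC (m j')) * dC (m j) * A m)
      = ∑ m : Fin (k+1) → β, (∏ j' ∈ univ.erase 0, θC (m j')) * dC (m 0) * A m := by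
  classical
  apply Fintype.sum_equiv (Equiv.arrowCongr (Equiv.swap (0 : Fin (k+1)) j) (Equiv.refl β))
  intro m
  have hmem : ∀ i : Fin (k+1), i ∈ univ.erase j ↔ Equiv.swap (0 : Fin (k+1)) j i ∈ univ.erase 0 := by
    intro i
    simp only [mem_erase, mem_univ, and_true, ne_eq]
    rw [Equiv.swap_apply_eq_iff, Equiv.swap_apply_left]
  have harr : ∀ i, (Equiv.arrowCongr (Equiv.swap (0 : Fin (k+1)) j) (Equiv.refl β)) m i
      = m (Equiv.swap (0 : Fin (k+1)) j i) := by
    intro i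
    simp [Equiv.arrowCongr_apply, Equiv.symm_swap]
  have hprod : (∏ j' ∈ univ.erase j, θC (m j'))
      = ∏ j' ∈ univ.erase 0, θC ((Equiv.arrowCongr (Equiv.swap (0 : Fin (k+1)) j)
          (Equiv.refl β)) m j') := by
    refine Finset.prod_equiv (Equiv.swap (0 : Fin (k+1)) j) hmem ?_
    intro i _
    rw [harr, Equiv.swap_apply_self]
  have hd : dC (m j) = dC ((Equiv.arrowCongr (Equiv.swap (0 : Fin (k+1)) j)
      (Equiv.refl β)) m 0) := by rw [harr, Equiv.swap_apply_left]
  have hAm : A m = A ((Equiv.arrowCongr (Equiv.swap (0 : Fin (k+1)) j) (Equiv.refl β)) m) := by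
    have := hA (Equiv.swap (0 : Fin (k+1)) j) m
    have he : (fun i => m (Equiv.swap (0 : Fin (k+1)) j i))
        = (Equiv.arrowCongr (Equiv.swap (0 : Fin (k+1)) j) (Equiv.refl β)) m :=
      funext fun i => (harr i).symm
    rw [← this, he]
  rw [← hprod, ← hd, ← hAm]

open Finset in
lemma sum_cons_split {β : Type*} [Fintype β] {k : ℕ} (θC dC : β → ℂ)
    (A : (Fin (k+1) → β) → ℂ) :
    (∑ m : Fin (k+1) → β, (∏ j' ∈ univ.erase 0, θC (m j')) * dC (m 0) * A m)
      = ∑ a : β, dC a * ∑ m' : Fin k → β, (∏ j', θC (m' j')) * A (Fin.cons (α := fun _ => β) a m') := by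
  classical
  have h1 : (∑ m : Fin (k+1) → β, (∏ j' ∈ univ.erase 0, θC (m j')) * dC (m 0) * A m)
      = ∑ y : β × (Fin k → β),
          dC y.1 * ((∏ j' : Fin k, θC (y.2 j')) * A (Fin.cons (α := fun _ => β) y.1 y.2)) := by
    refine (Fintype.sum_equiv (Fin.consEquiv (fun _ : Fin (k+1) => β)) _ _ ?_).symm
    rintro ⟨a, m'⟩
    have hc : (Fin.consEquiv (fun _ : Fin (k+1) => β)) (a, m') = Fin.cons (α := fun _ => β) a m' := rfl
    rw [hc]
    have hprod : (∏ j' ∈ univ.erase (0 : Fin (k+1)), θC (Fin.cons (α := fun _ => β) a m' j'))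
        = ∏ j' : Fin k, θC (m' j') := by
      rw [Fin.univ_succ, Finset.erase_cons, Finset.prod_map]
      refine Finset.prod_congr rfl fun i _ => ?_
      simp [Fin.cons_succ]
    rw [hprod, Fin.cons_zero]
    ring
  rw [h1, Fintype.sum_prod_type]
  refine Finset.sum_congr rfl fun a _ => ?_
  rw [Finset.mul_sum]

open Finset in
lemma term_shift_gen {β : Type*} [Fintype β] [DecidableEq β] {k : ℕ} (θC dC : β → ℂ)
    (c1 c2 : β)
    (hdC : ∀ a, dC a = (1/2 : ℂ) * ((if a = c1 then 1 else 0) - (if a = c2 then 1 else 0)))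
    (A : (Fin (k+1) → β) → ℂ) (B : β → (Fin k → β) → ℂ)
    (hA : ∀ (e : Equiv.Perm (Fin (k+1))) (m : Fin (k+1) → β), A (fun i => m (e i)) = A m)
    (hcons : ∀ (a : β) (m' : Fin k → β), A (Fin.cons (α := fun _ => β) a m') = B a m') :
    (∑ m : Fin (k+1) → β,
        (∑ j, (∏ j' ∈ univ.erase j, θC (m j')) * dC (m j)) * A m)
    = ((k : ℂ)+1) * ((1/2 : ℂ) *
        ((∑ m' : Fin k → β, (∏ j', θC (m' j')) * B c1 m')
          - (∑ m' : Fin k → β, (∏ j', θC (m' j')) * B c2 m'))) := by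
  classical
  have h0 : ∀ m : Fin (k+1) → β,
      (∑ j, (∏ j' ∈ univ.erase j, θC (m j')) * dC (m j)) * A m
        = ∑ j, (∏ j' ∈ univ.erase j, θC (m j')) * dC (m j) * A m :=
    fun m => Finset.sum_mul _ _ _
  rw [Finset.sum_congr rfl fun m _ => h0 m, Finset.sum_comm]
  rw [Finset.sum_congr rfl fun j _ => sum_erase_swap θC dC A hA j]
  rw [Finset.sum_const, card_univ, Fintype.card_fin, nsmul_eq_mul]
  rw [sum_cons_split θC dC A]
  push_cast
  congr 1
  have step : ∀ (H : β → ℂ),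
      (∑ a, (1/2 : ℂ) * ((if a = c1 then (1:ℂ) else 0) - (if a = c2 then 1 else 0)) * H a)
        = (1/2 : ℂ) * (H c1 - H c2) := by
    intro H
    have hpt : ∀ a, (1/2 : ℂ) * ((if a = c1 then (1:ℂ) else 0) - (if a = c2 then 1 else 0)) * H a
        = (1/2 : ℂ) * ((if a = c1 then H a else 0) - (if a = c2 then H a else 0)) := by
      intro a
      split_ifs <;> ring
    rw [Finset.sum_congr rfl fun a _ => hpt a, ← Finset.mul_sum, Finset.sum_sub_distrib,
      Finset.sum_ite_eq' univ c1 H, Finset.sum_ite_eq' univ c2 H,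
      if_pos (mem_univ c1), if_pos (mem_univ c2)]
  calc (∑ a : β, dC a * ∑ m' : Fin k → β, (∏ j', θC (m' j')) * A (Fin.cons (α := fun _ => β) a m'))
      = ∑ a : β, (1/2 : ℂ) * ((if a = c1 then (1:ℂ) else 0) - (if a = c2 then 1 else 0)) *
          (∑ m' : Fin k → β, (∏ j', θC (m' j')) * A (Fin.cons (α := fun _ => β) a m')) := by
        refine Finset.sum_congr rfl fun a _ => ?_
        rw [hdC a]
    _ = (1/2 : ℂ) *
          ((∑ m' : Fin k → β, (∏ j', θC (m' j')) * A (Fin.cons (α := fun _ => β) c1 m'))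
            - (∑ m' : Fin k → β, (∏ j', θC (m' j')) * A (Fin.cons (α := fun _ => β) c2 m'))) :=
        step _
    _ = _ := by
        simp_rw [hcons]

open Finset in
lemma moyal_term_shift (n : ℕ) (θ : Matrix (Fin n) (Fin n) ℝ) (ρ σ : Fin n)
    (p q : MvPolynomial (Fin n) ℂ) (x : Fin n → ℝ) (k : ℕ) :
    (((k+1).factorial : ℂ)⁻¹ * (Complex.I / 2) ^ (k+1) *
      ∑ m : Fin (k+1) → Fin n × Fin n,
        (∑ j, (∏ j' ∈ univ.erase j, ((θ (m j').1 (m j').2 : ℝ) : ℂ)) *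
            ((thetaDir n ρ σ (m j).1 (m j).2 : ℝ) : ℂ)) *
          (pdList n (List.ofFn fun i => (m i).1) (polyFun n p) x *
           pdList n (List.ofFn fun i => (m i).2) (polyFun n q) x))
    = Complex.I / 4 *
      (((k.factorial : ℂ)⁻¹ * (Complex.I / 2) ^ k *
        ∑ m : Fin k → Fin n × Fin n,
          (∏ j, ((θ (m j).1 (m j).2 : ℝ) : ℂ)) *
            (pdList n (List.ofFn fun i => (m i).1) (pd n ρ (polyFun n p)) x *
             pdList n (List.ofFn fun i => (m i).2) (pd n σ (polyFun n q)) x))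
       - ((k.factorial : ℂ)⁻¹ * (Complex.I / 2) ^ k *
        ∑ m : Fin k → Fin n × Fin n,
          (∏ j, ((θ (m j).1 (m j).2 : ℝ) : ℂ)) *
            (pdList n (List.ofFn fun i => (m i).1) (pd n σ (polyFun n p)) x *
             pdList n (List.ofFn fun i => (m i).2) (pd n ρ (polyFun n q)) x))) := by
  classical
  have hdC : ∀ a : Fin n × Fin n, ((thetaDir n ρ σ a.1 a.2 : ℝ) : ℂ)
      = (1/2 : ℂ) * ((if a = (ρ, σ) then 1 else 0) - (if a = (σ, ρ) then 1 else 0)) := by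
    rintro ⟨a1, a2⟩
    simp only [thetaDir, Prod.mk.injEq]
    rw [Complex.ofReal_mul, Complex.ofReal_sub,
      apply_ite (fun r : ℝ => (r : ℂ)), apply_ite (fun r : ℝ => (r : ℂ))]
    norm_num
  have hA : ∀ (e : Equiv.Perm (Fin (k+1))) (m : Fin (k+1) → Fin n × Fin n),
      (pdList n (List.ofFn fun i => ((fun i => m (e i)) i).1) (polyFun n p) x *
       pdList n (List.ofFn fun i => ((fun i => m (e i)) i).2) (polyFun n q) x)
      = (pdList n (List.ofFn fun i => (m i).1) (polyFun n p) x *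
         pdList n (List.ofFn fun i => (m i).2) (polyFun n q) x) := by
    intro e m
    rw [pdList_polyFun, pdList_polyFun, pdList_polyFun, pdList_polyFun,
      pdPoly_ofFn_comp (fun i => (m i).1) e, pdPoly_ofFn_comp (fun i => (m i).2) e]
  have hcons : ∀ (a : Fin n × Fin n) (m' : Fin k → Fin n × Fin n),
      (pdList n (List.ofFn fun i => ((Fin.cons (α := fun _ => Fin n × Fin n) a m') i).1)
          (polyFun n p) x *
       pdList n (List.ofFn fun i => ((Fin.cons (α := fun _ => Fin n × Fin n) a m') i).2)
          (polyFun n q) x)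
      = (pdList n (List.ofFn fun i => (m' i).1) (pd n a.1 (polyFun n p)) x *
         pdList n (List.ofFn fun i => (m' i).2) (pd n a.2 (polyFun n q)) x) := by
    intro a m'
    have hl1 : (List.ofFn fun i : Fin (k+1) =>
        ((Fin.cons (α := fun _ => Fin n × Fin n) a m') i).1)
        = a.1 :: List.ofFn (fun i : Fin k => (m' i).1) := by
      rw [List.ofFn_succ]
      congr 1
    have hl2 : (List.ofFn fun i : Fin (k+1) =>
        ((Fin.cons (α := fun _ => Fin n × Fin n) a m') i).2)
        = a.2 :: List.ofFn (fun i : Fin k => (m' i).2) := by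
      rw [List.ofFn_succ]
      congr 1
    rw [hl1, hl2]
    have hc1 : pdList n (a.1 :: List.ofFn (fun i : Fin k => (m' i).1)) (polyFun n p)
        = pd n a.1 (pdList n (List.ofFn (fun i : Fin k => (m' i).1)) (polyFun n p)) := rfl
    have hc2 : pdList n (a.2 :: List.ofFn (fun i : Fin k => (m' i).2)) (polyFun n q)
        = pd n a.2 (pdList n (List.ofFn (fun i : Fin k => (m' i).2)) (polyFun n q)) := rfl
    rw [hc1, hc2, pd_pdList_polyFun, pd_pdList_polyFun]
  have key := term_shift_gen (k := k)
    (fun a : Fin n × Fin n => ((θ a.1 a.2 : ℝ) : ℂ))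
    (fun a : Fin n × Fin n => ((thetaDir n ρ σ a.1 a.2 : ℝ) : ℂ))
    ((ρ, σ)) ((σ, ρ)) (fun a => hdC a)
    (fun m => pdList n (List.ofFn fun i => (m i).1) (polyFun n p) x *
       pdList n (List.ofFn fun i => (m i).2) (polyFun n q) x)
    (fun a m' => pdList n (List.ofFn fun i => (m' i).1) (pd n a.1 (polyFun n p)) x *
       pdList n (List.ofFn fun i => (m' i).2) (pd n a.2 (polyFun n q)) x)
    hA hcons
  rw [key]
  have hfac : (((k+1).factorial : ℂ)) = ((k+1 : ℕ) : ℂ) * (k.factorial : ℂ) := by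
    rw [Nat.factorial_succ]; push_cast; ring
  have hne1 : ((k : ℂ) + 1) ≠ 0 := by
    have := Nat.cast_add_one_ne_zero (R := ℂ) k
    exact_mod_cast this
  have hne2 : ((k.factorial : ℂ)) ≠ 0 := Nat.cast_ne_zero.mpr (Nat.factorial_ne_zero k)
  rw [hfac]
  push_cast
  field_simp
  ring

open Finset in
/-- Leibniz-type rule for the θ-derivative of the Moyal star product: for f, g
independent of θ (so that ∂f/∂θ^{ρσ} = ∂g/∂θ^{ρσ} = 0),
∂/∂θ^{ρσ}(f ⋆ g) = (∂f/∂θ^{ρσ}) ⋆ g + f ⋆ (∂g/∂θ^{ρσ})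
  + (i/4)[(∂_ρ f) ⋆ (∂_σ g) − (∂_σ f) ⋆ (∂_ρ g)],
where the θ-derivative is taken along the antisymmetrized direction `thetaDir`. -/
theorem moyal_theta_deriv (n : ℕ) (θ : Matrix (Fin n) (Fin n) ℝ)
    (hθ : ∀ μ ν, θ μ ν = - θ ν μ) (ρ σ : Fin n) (p q : MvPolynomial (Fin n) ℂ)
    (x : Fin n → ℝ) :
    HasDerivAt (fun t : ℝ => moyal n (θ + t • thetaDir n ρ σ) (polyFun n p) (polyFun n q) x)
      (moyal n θ (fun _ => 0) (polyFun n q) x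
        + moyal n θ (polyFun n p) (fun _ => 0) x
        + (Complex.I / 4) *
          (moyal n θ (pd n ρ (polyFun n p)) (pd n σ (polyFun n q)) x
            - moyal n θ (pd n σ (polyFun n p)) (pd n ρ (polyFun n q)) x))
      0 := by
  classical
  set N := p.totalDegree with hN
  -- vanishing of high-order terms
  have hvan : ∀ (θ' : Matrix (Fin n) (Fin n) ℝ) (p' : MvPolynomial (Fin n) ℂ)
      (g' : (Fin n → ℝ) → ℂ) (k : ℕ), p'.totalDegree < k →
      ((k.factorial : ℂ)⁻¹ * (Complex.I / 2) ^ k *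
        ∑ m : Fin k → Fin n × Fin n,
          (∏ j, ((θ' (m j).1 (m j).2 : ℝ) : ℂ)) *
            (pdList n (List.ofFn fun j => (m j).1) (polyFun n p') x *
             pdList n (List.ofFn fun j => (m j).2) g' x)) = 0 := by
    intro θ' p' g' k hk
    have hz : ∀ m ∈ (univ : Finset (Fin k → Fin n × Fin n)),
        (∏ j, ((θ' (m j).1 (m j).2 : ℝ) : ℂ)) *
          (pdList n (List.ofFn fun j => (m j).1) (polyFun n p') x *
           pdList n (List.ofFn fun j => (m j).2) g' x) = 0 := by
      intro m _
      rw [pdList_polyFun, pdPoly_eq_zero _ _ (by simpa using hk)]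
      simp
    rw [Finset.sum_eq_zero hz, mul_zero]
  -- zero-argument moyal values vanish
  have hz1 : moyal n θ (fun _ => 0) (polyFun n q) x = 0 := by
    simp [moyal, pdList_zero]
  have hz2 : moyal n θ (polyFun n p) (fun _ => 0) x = 0 := by
    simp [moyal, pdList_zero]
  -- finite sum representation of the left-hand side
  have hL : ∀ t : ℝ, moyal n (θ + t • thetaDir n ρ σ) (polyFun n p) (polyFun n q) x
      = ∑ k ∈ Finset.range (N+2), ((k.factorial : ℂ)⁻¹ * (Complex.I / 2) ^ k *
          ∑ m : Fin k → Fin n × Fin n,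
            (∏ j, (((θ + t • thetaDir n ρ σ) (m j).1 (m j).2 : ℝ) : ℂ)) *
              (pdList n (List.ofFn fun j => (m j).1) (polyFun n p) x *
               pdList n (List.ofFn fun j => (m j).2) (polyFun n q) x)) := by
    intro t
    refine tsum_eq_sum ?_
    intro k hk
    refine hvan _ p _ k ?_
    simp only [Finset.mem_range] at hk
    omega
  -- finite sum representation of the two right-hand moyal terms
  have hdegρ := totalDegree_pderiv_le' ρ p
  have hdegσ := totalDegree_pderiv_le' σ p
  have hR1 : moyal n θ (pd n ρ (polyFun n p)) (pd n σ (polyFun n q)) x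
      = ∑ k ∈ Finset.range (N+1), ((k.factorial : ℂ)⁻¹ * (Complex.I / 2) ^ k *
          ∑ m : Fin k → Fin n × Fin n,
            (∏ j, ((θ (m j).1 (m j).2 : ℝ) : ℂ)) *
              (pdList n (List.ofFn fun j => (m j).1) (pd n ρ (polyFun n p)) x *
               pdList n (List.ofFn fun j => (m j).2) (pd n σ (polyFun n q)) x)) := by
    refine tsum_eq_sum ?_
    intro k hk
    rw [pd_polyFun]
    refine hvan _ (MvPolynomial.pderiv ρ p) _ k ?_
    simp only [Finset.mem_range] at hk
    omega
  have hR2 : moyal n θ (pd n σ (polyFun n p)) (pd n ρ (polyFun n q)) x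
      = ∑ k ∈ Finset.range (N+1), ((k.factorial : ℂ)⁻¹ * (Complex.I / 2) ^ k *
          ∑ m : Fin k → Fin n × Fin n,
            (∏ j, ((θ (m j).1 (m j).2 : ℝ) : ℂ)) *
              (pdList n (List.ofFn fun j => (m j).1) (pd n σ (polyFun n p)) x *
               pdList n (List.ofFn fun j => (m j).2) (pd n ρ (polyFun n q)) x)) := by
    refine tsum_eq_sum ?_
    intro k hk
    rw [pd_polyFun]
    refine hvan _ (MvPolynomial.pderiv σ p) _ k ?_
    simp only [Finset.mem_range] at hk
    omega
  -- the derivative of the finite sum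
  have hd : HasDerivAt (fun t : ℝ => ∑ k ∈ Finset.range (N+2),
      ((k.factorial : ℂ)⁻¹ * (Complex.I / 2) ^ k *
        ∑ m : Fin k → Fin n × Fin n,
          (∏ j, (((θ + t • thetaDir n ρ σ) (m j).1 (m j).2 : ℝ) : ℂ)) *
            (pdList n (List.ofFn fun j => (m j).1) (polyFun n p) x *
             pdList n (List.ofFn fun j => (m j).2) (polyFun n q) x)))
      (∑ k ∈ Finset.range (N+2),
        ((k.factorial : ℂ)⁻¹ * (Complex.I / 2) ^ k *
          ∑ m : Fin k → Fin n × Fin n,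
            (∑ j, (∏ j' ∈ Finset.univ.erase j,
                (((θ + (0:ℝ) • thetaDir n ρ σ) (m j').1 (m j').2 : ℝ) : ℂ)) •
                ((thetaDir n ρ σ (m j).1 (m j).2 : ℝ) : ℂ)) *
              (pdList n (List.ofFn fun j => (m j).1) (polyFun n p) x *
               pdList n (List.ofFn fun j => (m j).2) (polyFun n q) x))) 0 := by
    apply HasDerivAt.fun_sum
    intro k _
    apply HasDerivAt.const_mul
    apply HasDerivAt.fun_sum
    intro m _
    apply HasDerivAt.mul_const
    have hf : ∀ j : Fin k, HasDerivAt
        (fun t : ℝ => (((θ + t • thetaDir n ρ σ) (m j).1 (m j).2 : ℝ) : ℂ))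
        ((thetaDir n ρ σ (m j).1 (m j).2 : ℝ) : ℂ) 0 := by
      intro j
      have base : HasDerivAt
          (fun t : ℝ => θ (m j).1 (m j).2 + t * thetaDir n ρ σ (m j).1 (m j).2)
          (thetaDir n ρ σ (m j).1 (m j).2) 0 := by
        simpa using ((hasDerivAt_id (0:ℝ)).mul_const
          (thetaDir n ρ σ (m j).1 (m j).2)).const_add (θ (m j).1 (m j).2)
      have h2 := base.ofReal_comp
      have he : (fun t : ℝ => (((θ + t • thetaDir n ρ σ) (m j).1 (m j).2 : ℝ) : ℂ))
          = fun t : ℝ =>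
            ((θ (m j).1 (m j).2 + t * thetaDir n ρ σ (m j).1 (m j).2 : ℝ) : ℂ) := by
        funext t
        simp [Matrix.add_apply, Matrix.smul_apply, smul_eq_mul]
      rw [he]
      exact h2
    exact HasDerivAt.fun_finset_prod (fun j _ => hf j)
  -- rewrite the function being differentiated
  have hFeq : (fun t : ℝ => moyal n (θ + t • thetaDir n ρ σ) (polyFun n p) (polyFun n q) x)
      = (fun t : ℝ => ∑ k ∈ Finset.range (N+2),
        ((k.factorial : ℂ)⁻¹ * (Complex.I / 2) ^ k *
          ∑ m : Fin k → Fin n × Fin n,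
            (∏ j, (((θ + t • thetaDir n ρ σ) (m j).1 (m j).2 : ℝ) : ℂ)) *
              (pdList n (List.ofFn fun j => (m j).1) (polyFun n p) x *
               pdList n (List.ofFn fun j => (m j).2) (polyFun n q) x))) :=
    funext hL
  rw [hFeq, hz1, hz2, zero_add, zero_add, hR1, hR2]
  convert hd using 1
  -- clean up the derivative expression
  have hclean : (∑ k ∈ Finset.range (N+2),
        ((k.factorial : ℂ)⁻¹ * (Complex.I / 2) ^ k *
          ∑ m : Fin k → Fin n × Fin n,
            (∑ j, (∏ j' ∈ Finset.univ.erase j,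
                (((θ + (0:ℝ) • thetaDir n ρ σ) (m j').1 (m j').2 : ℝ) : ℂ)) •
                ((thetaDir n ρ σ (m j).1 (m j).2 : ℝ) : ℂ)) *
              (pdList n (List.ofFn fun j => (m j).1) (polyFun n p) x *
               pdList n (List.ofFn fun j => (m j).2) (polyFun n q) x)))
      = ∑ k ∈ Finset.range (N+2),
        ((k.factorial : ℂ)⁻¹ * (Complex.I / 2) ^ k *
          ∑ m : Fin k → Fin n × Fin n,
            (∑ j, (∏ j' ∈ Finset.univ.erase j, ((θ (m j').1 (m j').2 : ℝ) : ℂ)) *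
                ((thetaDir n ρ σ (m j).1 (m j).2 : ℝ) : ℂ)) *
              (pdList n (List.ofFn fun j => (m j).1) (polyFun n p) x *
               pdList n (List.ofFn fun j => (m j).2) (polyFun n q) x)) := by
    simp only [zero_smul, add_zero, smul_eq_mul]
  rw [hclean]
  have hval : (∑ k ∈ Finset.range (N+2),
        ((k.factorial : ℂ)⁻¹ * (Complex.I / 2) ^ k *
          ∑ m : Fin k → Fin n × Fin n,
            (∑ j, (∏ j' ∈ Finset.univ.erase j, ((θ (m j').1 (m j').2 : ℝ) : ℂ)) *
                ((thetaDir n ρ σ (m j).1 (m j).2 : ℝ) : ℂ)) *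
              (pdList n (List.ofFn fun j => (m j).1) (polyFun n p) x *
               pdList n (List.ofFn fun j => (m j).2) (polyFun n q) x)))
      = Complex.I / 4 *
        ((∑ k ∈ Finset.range (N+1), ((k.factorial : ℂ)⁻¹ * (Complex.I / 2) ^ k *
          ∑ m : Fin k → Fin n × Fin n,
            (∏ j, ((θ (m j).1 (m j).2 : ℝ) : ℂ)) *
              (pdList n (List.ofFn fun j => (m j).1) (pd n ρ (polyFun n p)) x *
               pdList n (List.ofFn fun j => (m j).2) (pd n σ (polyFun n q)) x)))
         - (∑ k ∈ Finset.range (N+1), ((k.factorial : ℂ)⁻¹ * (Complex.I / 2) ^ k *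
          ∑ m : Fin k → Fin n × Fin n,
            (∏ j, ((θ (m j).1 (m j).2 : ℝ) : ℂ)) *
              (pdList n (List.ofFn fun j => (m j).1) (pd n σ (polyFun n p)) x *
               pdList n (List.ofFn fun j => (m j).2) (pd n ρ (polyFun n q)) x)))) := by
    rw [Finset.sum_range_succ']
    have h00 : ((Nat.factorial 0 : ℂ)⁻¹ * (Complex.I / 2) ^ 0 *
        ∑ m : Fin 0 → Fin n × Fin n,
          (∑ j : Fin 0, (∏ j' ∈ Finset.univ.erase j, ((θ (m j').1 (m j').2 : ℝ) : ℂ)) *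
              ((thetaDir n ρ σ (m j).1 (m j).2 : ℝ) : ℂ)) *
            (pdList n (List.ofFn fun j => (m j).1) (polyFun n p) x *
             pdList n (List.ofFn fun j => (m j).2) (polyFun n q) x)) = 0 := by
      simp
    rw [h00, add_zero]
    have hterm : ∀ k ∈ Finset.range (N+1),
        (((k+1).factorial : ℂ)⁻¹ * (Complex.I / 2) ^ (k+1) *
          ∑ m : Fin (k+1) → Fin n × Fin n,
            (∑ j, (∏ j' ∈ Finset.univ.erase j, ((θ (m j').1 (m j').2 : ℝ) : ℂ)) *
                ((thetaDir n ρ σ (m j).1 (m j).2 : ℝ) : ℂ)) *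
              (pdList n (List.ofFn fun j => (m j).1) (polyFun n p) x *
               pdList n (List.ofFn fun j => (m j).2) (polyFun n q) x))
        = Complex.I / 4 *
          (((k.factorial : ℂ)⁻¹ * (Complex.I / 2) ^ k *
            ∑ m : Fin k → Fin n × Fin n,
              (∏ j, ((θ (m j).1 (m j).2 : ℝ) : ℂ)) *
                (pdList n (List.ofFn fun j => (m j).1) (pd n ρ (polyFun n p)) x *
                 pdList n (List.ofFn fun j => (m j).2) (pd n σ (polyFun n q)) x))
           - ((k.factorial : ℂ)⁻¹ * (Complex.I / 2) ^ k *
            ∑ m : Fin k → Fin n × Fin n,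
              (∏ j, ((θ (m j).1 (m j).2 : ℝ) : ℂ)) *
                (pdList n (List.ofFn fun j => (m j).1) (pd n σ (polyFun n p)) x *
                 pdList n (List.ofFn fun j => (m j).2) (pd n ρ (polyFun n q)) x))) :=
      fun k _ => moyal_term_shift n θ ρ σ p q x k
    rw [Finset.sum_congr rfl hterm, ← Finset.mul_sum, Finset.sum_sub_distrib]
  rw [hval]
end

section
/- In the Moyal algebra, the star commutator of two covariant coordinates X̂^μ = x^μ + θ^{μν} Â_ν satisfies [X̂^μ, X̂^ν]_⋆ = i θ^{μν} + i θ^{μα} θ^{νβ} F̂_{αβ}, where F̂_{αβ} = ∂_α Â_β − ∂_β Â_α − i[Â_α, Â_β]_⋆. -/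
/-!
Write `X̂^μ = x^μ + S^μ` with `S^μ = θ^{μν} Â_ν` and expand the commutator bilinearly.
The coordinate relation `[x^μ, u] = i θ^{μρ} ∂_ρ u` turns `[x^μ, x^ν]` into `i θ^{μν}` (since
`∂_ρ x^ν = δ_ρ^ν`) and the two mixed terms into `i θ^{μα} θ^{νβ} (∂_α Â_β − ∂_β Â_α)`, while
`[S^μ, S^ν] = θ^{μα} θ^{νβ} [Â_α, Â_β]`, which is `i θ^{μα} θ^{νβ} (−i [Â_α, Â_β])` because `i² = −1`.
-/

open Finset

theorem lie_sum_smul_sum_smul {R L ι κ : Type*} [CommRing R] [LieRing L] [LieAlgebra R L]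
    [Fintype ι] [Fintype κ] (s : ι → R) (t : κ → R) (a : ι → L) (b : κ → L) :
    ⁅∑ α, s α • a α, ∑ β, t β • b β⁆ = ∑ α, ∑ β, (s α * t β) • ⁅a α, b β⁆ := by
  simp only [sum_lie_sum, smul_lie, lie_smul, smul_smul, mul_comm (t _)]

section Coordinates

attribute [local instance] LieRing.ofAssociativeRing

variable {𝕜 A ι : Type*} [CommRing 𝕜] [Ring A] [Algebra 𝕜 A] [Fintype ι]
  {θ : ι → ι → 𝕜} {c : 𝕜} {x : ι → A} {pd : ι → A →ₗ[𝕜] A}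

theorem lie_coord_coord [DecidableEq ι] (hx : ∀ μ u, ⁅x μ, u⁆ = c • ∑ ρ, θ μ ρ • pd ρ u)
    (hpdx : ∀ ρ ν, pd ρ (x ν) = if ρ = ν then 1 else 0) (μ ν : ι) :
    ⁅x μ, x ν⁆ = c • θ μ ν • (1 : A) := by
  simp [hx, hpdx]

theorem lie_coord_sum_smul (hx : ∀ μ u, ⁅x μ, u⁆ = c • ∑ ρ, θ μ ρ • pd ρ u)
    (a : ι → A) (μ ν : ι) :
    ⁅x μ, ∑ β, θ ν β • a β⁆ = c • ∑ α, ∑ β, (θ μ α * θ ν β) • pd α (a β) := by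
  simp only [hx, map_sum, map_smul, smul_sum, smul_smul]

theorem lie_sum_smul_coord (hx : ∀ μ u, ⁅x μ, u⁆ = c • ∑ ρ, θ μ ρ • pd ρ u)
    (a : ι → A) (μ ν : ι) :
    ⁅∑ α, θ μ α • a α, x ν⁆ = -(c • ∑ α, ∑ β, (θ μ α * θ ν β) • pd β (a α)) := by
  rw [← lie_skew, lie_coord_sum_smul hx, sum_comm]
  simp only [mul_comm]

end Coordinates

theorem covariant_coordinates_commutator_general {n : ℕ} {A : Type*} [Ring A] [Algebra ℂ A]
    (θ : Matrix (Fin n) (Fin n) ℝ)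
    (x Ahat : Fin n → A) (pd : Fin n → A →ₗ[ℂ] A)
    (hx : ∀ μ (u : A), x μ * u - u * x μ = Complex.I • ∑ ρ, ((θ μ ρ : ℝ) : ℂ) • pd ρ u)
    (hpdx : ∀ ρ ν, pd ρ (x ν) = if ρ = ν then (1 : A) else 0)
    (Xhat : Fin n → A) (hXhat : ∀ μ, Xhat μ = x μ + ∑ ν, ((θ μ ν : ℝ) : ℂ) • Ahat ν)
    (Fhat : Fin n → Fin n → A)
    (hF : ∀ α β, Fhat α β = pd α (Ahat β) - pd β (Ahat α)
        - Complex.I • (Ahat α * Ahat β - Ahat β * Ahat α)) :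
    ∀ μ ν, Xhat μ * Xhat ν - Xhat ν * Xhat μ
      = Complex.I • (((θ μ ν : ℝ) : ℂ) • (1 : A))
        + Complex.I • ∑ α, ∑ β, (((θ μ α : ℝ) : ℂ) * ((θ ν β : ℝ) : ℂ)) • Fhat α β := by
  intro μ ν
  let := LieRing.ofAssociativeRing (A := A)
  have hx' : ∀ μ u, ⁅x μ, u⁆ = Complex.I • ∑ ρ, ((θ μ ρ : ℝ) : ℂ) • pd ρ u :=
    fun μ u => (Ring.lie_def _ _).trans (hx μ u)
  rw [← Ring.lie_def, hXhat, hXhat, lie_add, add_lie, add_lie, lie_coord_coord hx' hpdx,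
    lie_coord_sum_smul hx', lie_sum_smul_coord hx', lie_sum_smul_sum_smul]
  simp only [hF, ← Ring.lie_def, smul_sub, sum_sub_distrib,
    smul_comm ((_ : ℂ) * _) Complex.I, ← smul_sum]
  simp only [smul_smul, Complex.I_mul_I, neg_one_smul]
  abel

/-- In the Moyal algebra, with covariant coordinates X̂^μ = x^μ + θ^{μν}Â_ν, the
star commutator satisfies
[X̂^μ, X̂^ν]_⋆ = i θ^{μν} + i θ^{μα}θ^{νβ} F̂_{αβ},
where F̂_{αβ} = ∂_α Â_β − ∂_β Â_α − i[Â_α, Â_β]_⋆. The Moyal algebra is modelled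
abstractly: an associative ℂ-algebra A with derivations ∂_ρ, coordinate elements
x^μ satisfying [x^μ, u]_⋆ = iθ^{μρ}∂_ρ u and ∂_ρ x^ν = δ_ρ^ν. -/
theorem covariant_coordinates_commutator {n : ℕ} {A : Type*} [Ring A] [Algebra ℂ A]
    (θ : Matrix (Fin n) (Fin n) ℝ) (hθ : ∀ μ ν, θ μ ν = - θ ν μ)
    (x Ahat : Fin n → A) (pd : Fin n → A →ₗ[ℂ] A)
    (hLeib : ∀ ρ (u v : A), pd ρ (u * v) = pd ρ u * v + u * pd ρ v)
    (hx : ∀ μ (u : A), x μ * u - u * x μ = Complex.I • ∑ ρ, ((θ μ ρ : ℝ) : ℂ) • pd ρ u)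
    (hpdx : ∀ ρ ν, pd ρ (x ν) = if ρ = ν then (1 : A) else 0)
    (Xhat : Fin n → A) (hXhat : ∀ μ, Xhat μ = x μ + ∑ ν, ((θ μ ν : ℝ) : ℂ) • Ahat ν)
    (Fhat : Fin n → Fin n → A)
    (hF : ∀ α β, Fhat α β = pd α (Ahat β) - pd β (Ahat α)
        - Complex.I • (Ahat α * Ahat β - Ahat β * Ahat α)) :
    ∀ μ ν, Xhat μ * Xhat ν - Xhat ν * Xhat μ
      = Complex.I • (((θ μ ν : ℝ) : ℂ) • (1 : A))
        + Complex.I • ∑ α, ∑ β, (((θ μ α : ℝ) : ℂ) * ((θ ν β : ℝ) : ℂ)) • Fhat α β :=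
  covariant_coordinates_commutator_general θ x Ahat pd hx hpdx Xhat hXhat Fhat hF
end
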